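/- arXiv:2312.16155 — 4 statements merged into one kernel-verified Lean document; each statement's English description precedes it below -/
import Mathlib

section
/- Let n > 0, 0 < ε < 1/4, and let 𝓔 be a finite Boolean subalgebra of the Borel sets of 2^ℕ such that for every A ∈ 𝓔 and every atom V of 𝓐_n either λ(A ∩ V) ≤ ελ(V)/n or λ(V \ A) ≤ ελ(V)/n. Define τ: 𝓔 → 𝓐_n by τ(A) = union of all atoms V of 𝓐_n with λ(V \ A) ≤ ελ(V)/n. Then τ is a Boolean algebra homomorphism (preserving ∅, 2^ℕ, complements, and unions) and λ(A △ τ(A)) ≤ ε/n for every A ∈ 𝓔. -/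
open MeasureTheory Set Filter

noncomputable section

/-- The Cantor space `2^ℕ`, realized as the compact group `(ℤ/2)^ℕ`. -/
abbrev Cantor : Type := ℕ → ZMod 2

/-- The standard product (Haar) probability measure `λ` on `2^ℕ`. -/
def lam : Measure Cantor := Measure.addHaarMeasure ⊤

/-- `V m i = {x ∈ 2^ℕ : x m = i}`. -/
def V (m : ℕ) (i : ZMod 2) : Set Cantor := {x | x m = i}

/-- `φ_m(A) = |λ(A ∩ V_m^0) − λ(A ∩ V_m^1)|`. -/
def phi (m : ℕ) (A : Set Cantor) : ℝ :=
  |(lam (A ∩ V m 0)).toReal - (lam (A ∩ V m 1)).toReal|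

/-- `ψ_m(A,B)`. -/
def psi (m : ℕ) (A B : Set Cantor) : ℝ :=
  |((lam (A ∩ V m 0)).toReal - (lam (A ∩ V m 1)).toReal) -
   ((lam (B ∩ V m 0)).toReal - (lam (B ∩ V m 1)).toReal)|

/-- `U` is an atom of the algebra `𝓐_n` generated by coordinates `0,…,n`:
a basic cylinder determined by the first `n+1` coordinates. -/
def IsAtomOf (n : ℕ) (U : Set Cantor) : Prop :=
  ∃ σ : Fin (n + 1) → ZMod 2, U = {x | ∀ i : Fin (n + 1), x i = σ i}

/-- Membership in the algebra `𝓐_n`: the set depends only on coordinates `0,…,n`. -/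
def MemA (n : ℕ) (S : Set Cantor) : Prop :=
  ∃ T : Set (Fin (n + 1) → ZMod 2), S = {x | (fun i : Fin (n + 1) => x i) ∈ T}

/-- `B` is a Boolean subalgebra of `Bor(2^ℕ)`. -/
def IsBorelSubalgebra (B : Set (Set Cantor)) : Prop :=
  (∀ A ∈ B, MeasurableSet A) ∧ univ ∈ B ∧ (∀ A ∈ B, Aᶜ ∈ B) ∧
    (∀ A ∈ B, ∀ C ∈ B, A ∪ C ∈ B)

/-- `B` contains `Clopen(2^ℕ)`. -/
def ContainsClopen (B : Set (Set Cantor)) : Prop :=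
  ∀ A : Set Cantor, IsClopen A → A ∈ B

/-- Property (T) of a subalgebra of `Bor(2^ℕ)`. -/
def HasPropT (B : Set (Set Cantor)) : Prop :=
  ∀ (p : ℕ) (A : Fin p → Set Cantor), (∀ i, A i ∈ B) → ∀ ε : ℝ, 0 < ε →
    ∃ n : ℕ, 0 < n ∧ ∀ U : Set Cantor, IsAtomOf n U → ∀ i : Fin p,
      ((lam (A i ∩ U)).toReal ≤ ε * (lam U).toReal / n ∨
        (lam (U \ A i)).toReal ≤ ε * (lam U).toReal / n) ∧
      ∀ m : ℕ, n < m → phi m (A i ∩ U) ≤ ε * (lam U).toReal / m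

/-- The map `τ` sending a set `A` to the union of all atoms `V` of `𝓐_n`
with `λ(V \ A) ≤ ελ(V)/n`. -/
def tau (n : ℕ) (ε : ℝ) (A : Set Cantor) : Set Cantor :=
  ⋃₀ {V' : Set Cantor | IsAtomOf n V' ∧ (lam (V' \ A)).toReal ≤ ε * (lam V').toReal / n}

/-! Every point lies in exactly one atom `atom n σ` of `𝓐_n`, so `τ(A)` is the preimage under
`x ↦ (x 0, …, x n)` of the set of `σ` on whose atom `A` is almost full, and membership in `τ(A)`
is decided atom by atom. Each threshold `ελ(V)/n` is less than a quarter of `λ(V)`, so no atom is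
both almost full and almost empty for `A`, and `A ∪ B` is not almost full on an atom where `A`
and `B` are both almost empty; together with the dichotomy hypothesis this gives the Boolean
homomorphism laws. On each atom `V`, `A ∆ τ(A)` is `V \ A` or `A ∩ V`, of measure at most
`ελ(V)/n`, and summing over the atoms gives `ε/n`. -/

namespace MeasureTheory

variable {α : Type*} [MeasurableSpace α] {μ : Measure α}

theorem measureReal_le_inter_add_sdiff (s t : Set α) :
    μ.real s ≤ μ.real (s ∩ t) + μ.real (s \ t) := by
  conv_lhs => rw [← inter_union_sdiff s t]
  exact measureReal_union_le _ _

theorem measureReal_le_mul_univ_of_inter_fiber_le {ι : Type*} [Fintype ι] [IsFiniteMeasure μ]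
    {f : α → ι} (hf : ∀ i, MeasurableSet (f ⁻¹' {i})) {D : Set α} {c : ℝ}
    (hD : ∀ i, μ.real (D ∩ f ⁻¹' {i}) ≤ c * μ.real (f ⁻¹' {i})) :
    μ.real D ≤ c * μ.real univ := by
  calc μ.real D = μ.real (⋃ i, D ∩ f ⁻¹' {i}) := by
        rw [← inter_iUnion, ← preimage_iUnion, iUnion_of_singleton, preimage_univ, inter_univ]
    _ ≤ ∑ i, μ.real (D ∩ f ⁻¹' {i}) := measureReal_iUnion_fintype_le _
    _ ≤ ∑ i, c * μ.real (f ⁻¹' {i}) := Finset.sum_le_sum fun i _ => hD i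
    _ = c * μ.real univ := by
        rw [← Finset.mul_sum, sum_measureReal_preimage_singleton _ fun i _ => hf i,
          Finset.coe_univ, preimage_univ]

end MeasureTheory

namespace Cantor

theorem lam_univ : lam univ = 1 := by
  rw [lam, ← TopologicalSpace.PositiveCompacts.coe_top]
  exact Measure.addHaarMeasure_self

instance : IsProbabilityMeasure lam := ⟨lam_univ⟩

instance : lam.IsOpenPosMeasure := by
  rw [lam]
  infer_instance

def trunc (n : ℕ) (x : Cantor) : Fin (n + 1) → ZMod 2 := fun i => x i

def atom (n : ℕ) (σ : Fin (n + 1) → ZMod 2) : Set Cantor := trunc n ⁻¹' {σ}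

variable {n : ℕ} {ε : ℝ} {σ : Fin (n + 1) → ZMod 2} {A B : Set Cantor}

theorem mem_atom_trunc (x : Cantor) : x ∈ atom n (trunc n x) := rfl

theorem atom_eq_setOf (n : ℕ) (σ : Fin (n + 1) → ZMod 2) :
    atom n σ = {x | ∀ i : Fin (n + 1), x i = σ i} := by
  ext x
  simp [atom, trunc, funext_iff]

theorem isAtomOf_atom : IsAtomOf n (atom n σ) := ⟨σ, atom_eq_setOf n σ⟩

theorem continuous_trunc (n : ℕ) : Continuous (trunc n) :=
  continuous_pi fun i => continuous_apply (i : ℕ)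

theorem isOpen_atom (n : ℕ) (σ : Fin (n + 1) → ZMod 2) : IsOpen (atom n σ) :=
  (isOpen_discrete {σ}).preimage (continuous_trunc n)

theorem atom_nonempty (n : ℕ) (σ : Fin (n + 1) → ZMod 2) : (atom n σ).Nonempty := by
  refine ⟨fun m => if h : m < n + 1 then σ ⟨m, h⟩ else 0, ?_⟩
  funext i
  simp [trunc, i.isLt]

theorem measureReal_atom_pos (n : ℕ) (σ : Fin (n + 1) → ZMod 2) : 0 < lam.real (atom n σ) :=
  ENNReal.toReal_pos ((isOpen_atom n σ).measure_ne_zero lam (atom_nonempty n σ))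
    (measure_ne_top _ _)

def AlmostContains (n : ℕ) (ε : ℝ) (A : Set Cantor) (σ : Fin (n + 1) → ZMod 2) : Prop :=
  lam.real (atom n σ \ A) ≤ ε * lam.real (atom n σ) / n

def AlmostDisjoint (n : ℕ) (ε : ℝ) (A : Set Cantor) (σ : Fin (n + 1) → ZMod 2) : Prop :=
  lam.real (A ∩ atom n σ) ≤ ε * lam.real (atom n σ) / n

theorem tau_eq_preimage : tau n ε A = trunc n ⁻¹' {σ | AlmostContains n ε A σ} := by
  ext x
  constructor
  · rintro ⟨_, ⟨⟨σ, rfl⟩, h⟩, hx⟩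
    have hσ : trunc n x = σ := funext hx
    rwa [← atom_eq_setOf, ← hσ] at h
  · exact fun h => ⟨atom n (trunc n x), ⟨isAtomOf_atom, h⟩, mem_atom_trunc x⟩

theorem mem_tau_iff {x : Cantor} : x ∈ tau n ε A ↔ AlmostContains n ε A (trunc n x) := by
  rw [tau_eq_preimage]
  rfl

theorem mul_threshold_lt (hε0 : 0 ≤ ε) {k : ℝ} (hk : 0 ≤ k) (hkε : k * ε < 1) :
    k * (ε * lam.real (atom n σ) / n) < lam.real (atom n σ) := by
  have hpos := measureReal_atom_pos n σ
  calc k * (ε * lam.real (atom n σ) / n) ≤ k * ε * lam.real (atom n σ) := by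
        rw [mul_assoc]
        exact mul_le_mul_of_nonneg_left (div_nat_le_self_of_nonnneg (by positivity) n) hk
    _ < lam.real (atom n σ) := by nlinarith

theorem AlmostContains.mono (hAB : A ⊆ B) (h : AlmostContains n ε A σ) :
    AlmostContains n ε B σ :=
  (measureReal_mono (sdiff_subset_sdiff_right hAB)).trans h

theorem almostContains_univ (hε0 : 0 ≤ ε) : AlmostContains n ε univ σ := by
  rw [AlmostContains, sdiff_univ, measureReal_empty]
  positivity

theorem almostDisjoint_empty (hε0 : 0 ≤ ε) : AlmostDisjoint n ε ∅ σ := by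
  rw [AlmostDisjoint, empty_inter, measureReal_empty]
  positivity

theorem almostContains_compl : AlmostContains n ε Aᶜ σ ↔ AlmostDisjoint n ε A σ := by
  rw [AlmostContains, AlmostDisjoint, sdiff_compl, inter_comm]

theorem AlmostDisjoint.not_almostContains (hε0 : 0 ≤ ε) (hε : ε < 1 / 2)
    (h : AlmostDisjoint n ε A σ) : ¬AlmostContains n ε A σ := fun h' => by
  have := mul_threshold_lt (n := n) (σ := σ) hε0 zero_le_two (by linarith)
  have hcover := measureReal_le_inter_add_sdiff (μ := lam) (atom n σ) A
  rw [inter_comm] at hcover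
  unfold AlmostDisjoint at h
  unfold AlmostContains at h'
  linarith

theorem AlmostDisjoint.not_almostContains_union (hε0 : 0 ≤ ε) (hε : ε < 1 / 3)
    (hA : AlmostDisjoint n ε A σ) (hB : AlmostDisjoint n ε B σ) :
    ¬AlmostContains n ε (A ∪ B) σ := fun h => by
  have := mul_threshold_lt (n := n) (σ := σ) hε0 zero_le_three (by linarith)
  have hAB : lam.real ((A ∪ B) ∩ atom n σ) ≤
      lam.real (A ∩ atom n σ) + lam.real (B ∩ atom n σ) := by
    rw [union_inter_distrib_right]
    exact measureReal_union_le _ _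
  have hcover := measureReal_le_inter_add_sdiff (μ := lam) (atom n σ) (A ∪ B)
  rw [inter_comm] at hcover
  unfold AlmostDisjoint AlmostContains at *
  linarith

theorem tau_empty (hε0 : 0 ≤ ε) (hε : ε < 1 / 2) : tau n ε ∅ = ∅ :=
  eq_empty_of_forall_notMem fun _ hx =>
    (almostDisjoint_empty hε0).not_almostContains hε0 hε (mem_tau_iff.1 hx)

theorem tau_univ (hε0 : 0 ≤ ε) : tau n ε univ = univ :=
  eq_univ_of_forall fun _ => mem_tau_iff.2 (almostContains_univ hε0)

theorem tau_compl (hε0 : 0 ≤ ε) (hε : ε < 1 / 2)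
    (hA : ∀ σ, AlmostDisjoint n ε A σ ∨ AlmostContains n ε A σ) :
    tau n ε Aᶜ = (tau n ε A)ᶜ := by
  ext x
  rw [mem_compl_iff, mem_tau_iff, mem_tau_iff, almostContains_compl]
  exact ⟨fun h => h.not_almostContains hε0 hε, (hA _).resolve_right⟩

theorem tau_union (hε0 : 0 ≤ ε) (hε : ε < 1 / 3)
    (hA : ∀ σ, AlmostDisjoint n ε A σ ∨ AlmostContains n ε A σ)
    (hB : ∀ σ, AlmostDisjoint n ε B σ ∨ AlmostContains n ε B σ) :
    tau n ε (A ∪ B) = tau n ε A ∪ tau n ε B := by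
  ext x
  simp only [mem_union, mem_tau_iff]
  refine ⟨fun h => ?_, ?_⟩
  · by_contra! hAB
    exact ((hA _).resolve_right hAB.1).not_almostContains_union hε0 hε
      ((hB _).resolve_right hAB.2) h
  · rintro (h | h)
    exacts [h.mono subset_union_left, h.mono subset_union_right]

theorem memA_tau : MemA n (tau n ε A) := ⟨_, tau_eq_preimage⟩

theorem tau_inter_atom_of_almostContains (h : AlmostContains n ε A σ) :
    tau n ε A ∩ atom n σ = atom n σ :=
  inter_eq_right.2 fun _ hx => mem_tau_iff.2 ((mem_singleton_iff.1 hx).symm ▸ h)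

theorem tau_inter_atom_of_not_almostContains (h : ¬AlmostContains n ε A σ) :
    tau n ε A ∩ atom n σ = ∅ :=
  eq_empty_of_forall_notMem fun _ hx =>
    h ((mem_singleton_iff.1 hx.2) ▸ mem_tau_iff.1 hx.1)

theorem measureReal_symmDiff_tau_inter_atom_le
    (hA : AlmostDisjoint n ε A σ ∨ AlmostContains n ε A σ) :
    lam.real (symmDiff A (tau n ε A) ∩ atom n σ) ≤ ε * lam.real (atom n σ) / n := by
  rw [inter_symmDiff_distrib_right]
  by_cases hc : AlmostContains n ε A σ
  · rw [tau_inter_atom_of_almostContains hc, symmDiff_of_le inter_subset_right,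
      sdiff_inter_self_eq_sdiff]
    exact hc
  · rw [tau_inter_atom_of_not_almostContains hc, ← bot_eq_empty, symmDiff_bot]
    exact hA.resolve_right hc

theorem measureReal_symmDiff_tau_le
    (hA : ∀ σ, AlmostDisjoint n ε A σ ∨ AlmostContains n ε A σ) :
    lam.real (symmDiff A (tau n ε A)) ≤ ε / n := by
  have := measureReal_le_mul_univ_of_inter_fiber_le
    (fun σ => (isOpen_atom n σ).measurableSet) (c := ε / n) fun σ => by
      rw [div_mul_eq_mul_div]
      exact measureReal_symmDiff_tau_inter_atom_le (hA σ)
  rwa [probReal_univ, mul_one] at this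

end Cantor

open Cantor in
theorem stmt10_general (n : ℕ) (ε : ℝ) (hε0 : 0 < ε) (hε : ε < 1 / 4)
    (E : Set (Set Cantor))
    (hsplit : ∀ A ∈ E, ∀ V' : Set Cantor, IsAtomOf n V' →
      (lam (A ∩ V')).toReal ≤ ε * (lam V').toReal / n ∨
      (lam (V' \ A)).toReal ≤ ε * (lam V').toReal / n) :
    tau n ε ∅ = ∅ ∧ tau n ε univ = univ ∧
    (∀ A ∈ E, tau n ε Aᶜ = (tau n ε A)ᶜ) ∧
    (∀ A ∈ E, ∀ B ∈ E, tau n ε (A ∪ B) = tau n ε A ∪ tau n ε B) ∧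
    (∀ A ∈ E, MemA n (tau n ε A)) ∧
    (∀ A ∈ E, (lam (symmDiff A (tau n ε A))).toReal ≤ ε / n) := by
  have hdich : ∀ A ∈ E, ∀ σ, AlmostDisjoint n ε A σ ∨ AlmostContains n ε A σ :=
    fun A hA _ => hsplit A hA _ isAtomOf_atom
  exact ⟨tau_empty hε0.le (by linarith), tau_univ hε0.le,
    fun A hA => tau_compl hε0.le (by linarith) (hdich A hA),
    fun A hA B hB => tau_union hε0.le (by linarith) (hdich A hA) (hdich B hB),
    fun _ _ => memA_tau, fun A hA => measureReal_symmDiff_tau_le (hdich A hA)⟩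

theorem stmt10 (n : ℕ) (hn : 0 < n) (ε : ℝ) (hε0 : 0 < ε) (hε : ε < 1 / 4)
    (E : Set (Set Cantor)) (hEfin : E.Finite)
    (hEmeas : ∀ A ∈ E, MeasurableSet A) (hEuniv : univ ∈ E)
    (hEcompl : ∀ A ∈ E, Aᶜ ∈ E) (hEunion : ∀ A ∈ E, ∀ B ∈ E, A ∪ B ∈ E)
    (hsplit : ∀ A ∈ E, ∀ V' : Set Cantor, IsAtomOf n V' →
      (lam (A ∩ V')).toReal ≤ ε * (lam V').toReal / n ∨
      (lam (V' \ A)).toReal ≤ ε * (lam V').toReal / n) :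
    tau n ε ∅ = ∅ ∧ tau n ε univ = univ ∧
    (∀ A ∈ E, tau n ε Aᶜ = (tau n ε A)ᶜ) ∧
    (∀ A ∈ E, ∀ B ∈ E, tau n ε (A ∪ B) = tau n ε A ∪ tau n ε B) ∧
    (∀ A ∈ E, MemA n (tau n ε A)) ∧
    (∀ A ∈ E, (lam (symmDiff A (tau n ε A))).toReal ≤ ε / n) :=
  stmt10_general n ε hε0 hε E hsplit
end
end

section
/- No Boolean subalgebra 𝓑 of Bor(2^ℕ) that contains Clopen(2^ℕ) and has property (T) contains all open subsets of 2^ℕ. -/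
open MeasureTheory Set Filter

noncomputable section

def cyl (N : ℕ) (σ : Fin (N+1) → ZMod 2) : Set Cantor := {x | ∀ i : Fin (N+1), x i = σ i}

instance : lam.IsAddLeftInvariant := by unfold lam; infer_instance

lemma lam_univ : lam univ = 1 := by
  rw [lam, ← TopologicalSpace.PositiveCompacts.coe_top]
  exact Measure.addHaarMeasure_self

instance : IsProbabilityMeasure lam := ⟨lam_univ⟩

lemma meas_cyl (N : ℕ) (σ : Fin (N+1) → ZMod 2) : MeasurableSet (cyl N σ) := by
  have : cyl N σ = ⋂ i : Fin (N+1), (fun x : Cantor => x (i:ℕ)) ⁻¹' {σ i} := by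
    ext x; simp [cyl]
  rw [this]
  exact MeasurableSet.iInter fun i => (measurable_pi_apply _) (measurableSet_singleton _)

lemma isOpen_cyl (N : ℕ) (σ : Fin (N+1) → ZMod 2) : IsOpen (cyl N σ) := by
  have : cyl N σ = ⋂ i : Fin (N+1), (fun x : Cantor => x (i:ℕ)) ⁻¹' {σ i} := by
    ext x; simp [cyl]
  rw [this]
  exact isOpen_iInter_of_finite fun i =>
    (continuous_apply (i : ℕ)).isOpen_preimage _ (isOpen_discrete _)

lemma cyl_eq_translate (N : ℕ) (σ : Fin (N+1) → ZMod 2) :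
    cyl N σ = (fun x : Cantor => (fun j : ℕ => if h : j < N+1 then σ ⟨j, h⟩ else 0) + x) ⁻¹' (cyl N 0) := by
  ext x
  simp only [cyl, mem_preimage, mem_setOf_eq, Pi.add_apply, Pi.zero_apply]
  constructor
  · intro hx i
    rw [dif_pos i.isLt, hx i]
    exact CharTwo.add_self_eq_zero _
  · intro hx i
    have h := hx i
    rw [dif_pos i.isLt] at h
    have h2 : x i = -σ ⟨(i:ℕ), i.isLt⟩ := eq_neg_of_add_eq_zero_right h
    rw [CharTwo.neg_eq] at h2
    simpa using h2

lemma lam_cyl_eq (N : ℕ) (σ : Fin (N+1) → ZMod 2) : lam (cyl N σ) = lam (cyl N 0) := by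
  conv_lhs => rw [cyl_eq_translate N σ]
  exact measure_preimage_add lam _ _

lemma lam_cyl (N : ℕ) (σ : Fin (N+1) → ZMod 2) : lam (cyl N σ) = (2 : ENNReal)⁻¹ ^ (N+1) := by
  have hdisj : Pairwise (Function.onFun Disjoint (fun τ : Fin (N+1) → ZMod 2 => cyl N τ)) := by
    intro τ₁ τ₂ hne
    rw [Function.onFun, Set.disjoint_left]
    intro x h1 h2
    exact hne (funext fun i => (h1 i).symm.trans (h2 i))
  have hsum := measure_iUnion (μ := lam) hdisj (fun τ => meas_cyl N τ)
  have hcover : (⋃ τ : Fin (N+1) → ZMod 2, cyl N τ) = univ :=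
    eq_univ_of_forall fun x => mem_iUnion.2 ⟨fun i => x i, fun i => rfl⟩
  rw [hcover, lam_univ, tsum_fintype] at hsum
  rw [Finset.sum_congr rfl (fun τ _ => lam_cyl_eq N τ), Finset.sum_const] at hsum
  have hcard : (Finset.univ : Finset (Fin (N+1) → ZMod 2)).card = 2 ^ (N+1) := by
    simp [Fintype.card_fun]
  rw [hcard, nsmul_eq_mul] at hsum
  push_cast at hsum
  have key : lam (cyl N 0) * (2:ENNReal) ^ (N+1) = 1 := by rw [mul_comm]; exact hsum.symm
  rw [lam_cyl_eq N σ, ← ENNReal.inv_pow]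
  exact ENNReal.eq_inv_of_mul_eq_one_left key

lemma lam_cyl_toReal (N : ℕ) (σ : Fin (N+1) → ZMod 2) :
    (lam (cyl N σ)).toReal = (2:ℝ)⁻¹ ^ (N+1) := by
  rw [lam_cyl]
  simp [ENNReal.toReal_pow, ENNReal.toReal_inv]

/-- The building blocks of the bad open set. -/
def D (k : ℕ) : Set Cantor := {x | (∀ i, i < k → x i = 0) ∧ x k = 1 ∧ x (k+1) = 0}

lemma D_eq_cyl (k : ℕ) :
    D k = cyl (k+1) (fun i => if (i:ℕ) = k then 1 else 0) := by
  ext x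
  constructor
  · rintro ⟨h1, h2, h3⟩ i
    show x i = if (i:ℕ) = k then 1 else 0
    rcases lt_trichotomy (i:ℕ) k with h | h | h
    · rw [if_neg (Nat.ne_of_lt h)]; exact h1 i h
    · rw [if_pos h, h]; exact h2
    · have hik : (i:ℕ) = k + 1 := by have := i.isLt; omega
      rw [if_neg (by omega), hik]; exact h3
  · intro hx
    refine ⟨fun i hi => ?_, ?_, ?_⟩
    · have h : x i = if i = k then 1 else 0 := hx ⟨i, by omega⟩
      rwa [if_neg (Nat.ne_of_lt hi)] at h
    · have h : x k = if k = k then 1 else 0 := hx ⟨k, by omega⟩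
      rwa [if_pos rfl] at h
    · have h : x (k+1) = if k+1 = k then 1 else 0 := hx ⟨k+1, by omega⟩
      rwa [if_neg (by omega)] at h

lemma lam_D (k : ℕ) : (lam (D k)).toReal = (2:ℝ)⁻¹ ^ (k+2) := by
  rw [D_eq_cyl, lam_cyl_toReal]

/-- The bad open set. -/
def OO : Set Cantor := ⋃ k, D k

lemma isOpen_OO : IsOpen OO :=
  isOpen_iUnion fun k => (D_eq_cyl k) ▸ isOpen_cyl _ _

theorem stmt12 (B : Set (Set Cantor)) (hB : IsBorelSubalgebra B)
    (hclopen : ContainsClopen B) (hT : HasPropT B) :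
    ¬ ∀ O : Set Cantor, IsOpen O → O ∈ B := by
  intro hopen
  have hOB : OO ∈ B := hopen OO isOpen_OO
  obtain ⟨n, hn, hprop⟩ := hT 1 (fun _ => OO) (fun _ => hOB) (1/8) (by norm_num)
  set U : Set Cantor := cyl n 0 with hU
  have hatom : IsAtomOf n U := ⟨0, rfl⟩
  have hkey := (hprop U hatom 0).2 (n+2) (by omega)
  -- lower bound on phi (n+2) (OO ∩ U)
  have hsub1 : D (n+1) ⊆ (OO ∩ U) ∩ V (n+2) 0 := by
    rintro x ⟨h1, h2, h3⟩
    refine ⟨⟨mem_iUnion.2 ⟨n+1, h1, h2, h3⟩, fun i => h1 i (by omega)⟩, h3⟩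
  have hsub2 : (OO ∩ U) ∩ V (n+2) 1 ⊆ D (n+2) := by
    rintro x ⟨⟨hO, hUx⟩, hV⟩
    have hV' : x (n+2) = 1 := hV
    obtain ⟨k, h1, h2, h3⟩ := mem_iUnion.1 hO
    have hUx' : ∀ i : Fin (n+1), x i = 0 := hUx
    have hk1 : ¬ k ≤ n := fun h => by
      have hz : x k = 0 := hUx' ⟨k, by omega⟩
      rw [hz] at h2; exact absurd h2 (by decide)
    have hk2 : k ≠ n + 1 := by
      rintro rfl
      have h3' : x (n+2) = 0 := h3
      rw [h3'] at hV'; exact absurd hV' (by decide)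
    have hk3 : ¬ n + 2 < k := fun h => by
      have hz : x (n+2) = 0 := h1 (n+2) h
      rw [hz] at hV'; exact absurd hV' (by decide)
    have hk : k = n + 2 := by omega
    subst hk
    exact ⟨h1, h2, h3⟩
  have ha : (2:ℝ)⁻¹ ^ (n+3) ≤ (lam ((OO ∩ U) ∩ V (n+2) 0)).toReal := by
    rw [← lam_D (n+1)]
    exact ENNReal.toReal_mono (measure_ne_top lam _) (measure_mono hsub1)
  have hb : (lam ((OO ∩ U) ∩ V (n+2) 1)).toReal ≤ (2:ℝ)⁻¹ ^ (n+4) := by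
    rw [← lam_D (n+2)]
    exact ENNReal.toReal_mono (measure_ne_top lam _) (measure_mono hsub2)
  have hphi : (2:ℝ)⁻¹ ^ (n+4) ≤ phi (n+2) (OO ∩ U) := by
    have : (2:ℝ)⁻¹ ^ (n+3) - (2:ℝ)⁻¹ ^ (n+4) = (2:ℝ)⁻¹ ^ (n+4) := by ring
    rw [phi]
    calc (2:ℝ)⁻¹ ^ (n+4) = (2:ℝ)⁻¹ ^ (n+3) - (2:ℝ)⁻¹ ^ (n+4) := this.symm
      _ ≤ (lam ((OO ∩ U) ∩ V (n+2) 0)).toReal - (lam ((OO ∩ U) ∩ V (n+2) 1)).toReal := by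
          linarith
      _ ≤ |(lam ((OO ∩ U) ∩ V (n+2) 0)).toReal - (lam ((OO ∩ U) ∩ V (n+2) 1)).toReal| :=
          le_abs_self _
  -- upper bound from property (T)
  have hUval : (lam U).toReal = (2:ℝ)⁻¹ ^ (n+1) := lam_cyl_toReal n 0
  rw [hUval] at hkey
  have hrhs : (1/8 : ℝ) * (2:ℝ)⁻¹ ^ (n+1) / ((n:ℝ)+2) = (2:ℝ)⁻¹ ^ (n+4) / ((n:ℝ)+2) := by
    ring
  have hcast : ((n+2 : ℕ) : ℝ) = (n:ℝ) + 2 := by push_cast; ring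
  rw [hcast, hrhs] at hkey
  have hpos : (0:ℝ) < (2:ℝ)⁻¹ ^ (n+4) := by positivity
  have hlt : (2:ℝ)⁻¹ ^ (n+4) / ((n:ℝ)+2) < (2:ℝ)⁻¹ ^ (n+4) :=
    div_lt_self hpos (by have h1 : (0:ℝ) ≤ (n:ℝ) := Nat.cast_nonneg n; linarith)
  linarith
end
end

section
/- If a Boolean subalgebra 𝓑 of Bor(2^ℕ) containing Clopen(2^ℕ) has property (T), then 𝓑 does not have the Nikodym property: the sequence of finitely additive measures μ_n on 𝓑 defined by μ_n(A) = n(λ(A ∩ V_n^0) − λ(A ∩ V_n^1)) converges pointwise to 0 on every A ∈ 𝓑, yet ‖μ_n‖ = n for all n, so (μ_n) is pointwise bounded but not uniformly bounded. -/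
open MeasureTheory Set Filter

noncomputable section

/-- The measures `μ_n(A) = n(λ(A ∩ V_n^0) − λ(A ∩ V_n^1))`. -/
def mu (n : ℕ) (A : Set Cantor) : ℝ :=
  n * ((lam (A ∩ V n 0)).toReal - (lam (A ∩ V n 1)).toReal)

/-- The set of all sums `Σ_i |μ(P_i)|` over finite partitions of `2^ℕ` into elements of `B`. -/
def partitionSums (B : Set (Set Cantor)) (μ : Set Cantor → ℝ) : Set ℝ :=
  {r : ℝ | ∃ (k : ℕ) (P : Fin k → Set Cantor), (∀ i, P i ∈ B) ∧
    Pairwise (Function.onFun Disjoint P) ∧ (⋃ i, P i) = univ ∧ r = ∑ i, |μ (P i)|}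

/-- The total variation norm of a finitely additive measure on `B`. -/
def tvNorm (B : Set (Set Cantor)) (μ : Set Cantor → ℝ) : ℝ :=
  sSup (partitionSums B μ)

/-- `μ` is a bounded finitely additive signed measure on `B`. -/
def IsBddFinAdd (B : Set (Set Cantor)) (μ : Set Cantor → ℝ) : Prop :=
  μ ∅ = 0 ∧ (∀ A ∈ B, ∀ C ∈ B, Disjoint A C → μ (A ∪ C) = μ A + μ C) ∧
    BddAbove (partitionSums B μ)

/-- The Nikodym property of a Boolean subalgebra of `Bor(2^ℕ)`: every pointwise bounded
sequence of bounded finitely additive measures is uniformly bounded. -/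
def HasNikodym (B : Set (Set Cantor)) : Prop :=
  ∀ μ : ℕ → Set Cantor → ℝ, (∀ n, IsBddFinAdd B (μ n)) →
    (∀ A ∈ B, ∃ M : ℝ, ∀ n, |μ n A| ≤ M) →
    ∃ M : ℝ, ∀ n, tvNorm B (μ n) ≤ M


instance lam_prob : IsProbabilityMeasure lam := by
  constructor
  have := Measure.addHaarMeasure_self (K₀ := (⊤ : TopologicalSpace.PositiveCompacts Cantor))
  simpa [lam, TopologicalSpace.PositiveCompacts.coe_top] using this

instance lam_haar : lam.IsAddHaarMeasure := Measure.isAddHaarMeasure_addHaarMeasure _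

lemma measV (m : ℕ) (i : ZMod 2) : MeasurableSet (V m i) := by
  have : V m i = (fun x : Cantor => x m) ⁻¹' {i} := rfl
  rw [this]
  exact (measurable_pi_apply m) (measurableSet_singleton i)

lemma clopenV (m : ℕ) (i : ZMod 2) : IsClopen (V m i) :=
  (isClopen_discrete {i}).preimage (continuous_apply m)

lemma V_union (m : ℕ) : V m 0 ∪ V m 1 = univ := by
  have h : ∀ j : ZMod 2, j = 0 ∨ j = 1 := by decide
  ext x; simpa [V] using h (x m)

lemma V_disj (m : ℕ) : Disjoint (V m 0) (V m 1) := by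
  rw [Set.disjoint_left]; intro x h0 h1
  exact absurd (h0.symm.trans h1) (by decide)

lemma lam_V (m : ℕ) (i : ZMod 2) : lam (V m i) = 1/2 := by
  have heq : lam (V m 0) = lam (V m 1) := by
    have h : V m 1 = ((Pi.single m 1 : Cantor) + ·) ⁻¹' V m 0 := by
      have h1 : ∀ a : ZMod 2, 1 + a = 0 ↔ a = 1 := by decide
      ext x; simp [V, Pi.single_eq_same, h1]
    rw [h, measure_preimage_add]
  have h2 : lam (V m 0) + lam (V m 1) = 1 := by
    rw [← measure_union (V_disj m) (measV m 1), V_union, measure_univ]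
  have h3 : (2 : ENNReal) * lam (V m 1) = 1 := by rw [two_mul, ← heq]; exact heq ▸ h2
  have h4 : lam (V m 1) = 1/2 :=
    (ENNReal.eq_div_iff two_ne_zero ENNReal.ofNat_ne_top).mpr h3
  have hi : ∀ j : ZMod 2, j = 0 ∨ j = 1 := by decide
  rcases hi i with h | h <;> subst h
  · rw [heq, h4]
  · exact h4

lemma sum_toReal {ι : Type*} [Fintype ι] (P : ι → Set Cantor)
    (hm : ∀ i, MeasurableSet (P i)) (hd : Pairwise (Function.onFun Disjoint P)) :
    ∑ i, (lam (P i)).toReal = (lam (⋃ i, P i)).toReal := by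
  rw [measure_iUnion hd hm, tsum_fintype,
    ENNReal.toReal_sum (fun i _ => measure_ne_top lam _)]

def atomC (n : ℕ) (σ : Fin (n+1) → ZMod 2) : Set Cantor := {x | ∀ i : Fin (n+1), x i = σ i}

lemma atom_meas (n : ℕ) (σ : Fin (n+1) → ZMod 2) : MeasurableSet (atomC n σ) := by
  have : atomC n σ = ⋂ i : Fin (n+1), (fun x : Cantor => x i) ⁻¹' {σ i} := by
    ext x; simp [atomC]
  rw [this]
  exact MeasurableSet.iInter fun i => (measurable_pi_apply _) (measurableSet_singleton _)

lemma atom_disj (n : ℕ) : Pairwise (Function.onFun Disjoint (atomC n)) := by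
  intro σ τ h
  rw [Function.onFun, Set.disjoint_left]
  intro x hx hx'
  exact h (funext fun i => (hx i).symm.trans (hx' i))

lemma atom_cover (n : ℕ) : ⋃ σ, atomC n σ = univ :=
  eq_univ_of_forall fun x => mem_iUnion.2 ⟨fun i => x i, fun i => rfl⟩

lemma decomp (A S : Set Cantor) (hA : MeasurableSet A) (hS : MeasurableSet S) (n : ℕ) :
    (lam (A ∩ S)).toReal = ∑ σ : Fin (n+1) → ZMod 2, (lam (A ∩ atomC n σ ∩ S)).toReal := by
  rw [sum_toReal (fun σ => A ∩ atomC n σ ∩ S)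
    (fun σ => (hA.inter (atom_meas n σ)).inter hS)
    (fun σ τ h => ((atom_disj n h).mono
      (inter_subset_left.trans inter_subset_right)
      (inter_subset_left.trans inter_subset_right)))]
  have hU : (⋃ σ : Fin (n+1) → ZMod 2, A ∩ atomC n σ ∩ S) = A ∩ S := by
    ext x
    simp only [mem_iUnion, mem_inter_iff, mem_setOf_eq, atomC]
    constructor
    · rintro ⟨σ, ⟨hxA, _⟩, hxS⟩; exact ⟨hxA, hxS⟩
    · rintro ⟨hxA, hxS⟩; exact ⟨fun i => x i, ⟨hxA, fun i => rfl⟩, hxS⟩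
  rw [hU]

lemma atom_sum (n : ℕ) : ∑ σ : Fin (n+1) → ZMod 2, (lam (atomC n σ)).toReal = 1 := by
  rw [sum_toReal _ (atom_meas n) (atom_disj n), atom_cover]
  simp

lemma lam_split (P : Set Cantor) (hP : MeasurableSet P) (n : ℕ) :
    (lam (P ∩ V n 0)).toReal + (lam (P ∩ V n 1)).toReal = (lam P).toReal := by
  rw [← ENNReal.toReal_add (measure_ne_top lam _) (measure_ne_top lam _),
    ← measure_union ((V_disj n).mono inter_subset_right inter_subset_right)
      (hP.inter (measV n 1)),
    ← inter_union_distrib_left, V_union, inter_univ]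

lemma mu_abs_le (n : ℕ) (P : Set Cantor) (hP : MeasurableSet P) :
    |mu n P| ≤ n * (lam P).toReal := by
  have h0 : (0:ℝ) ≤ (lam (P ∩ V n 0)).toReal := ENNReal.toReal_nonneg
  have h1 : (0:ℝ) ≤ (lam (P ∩ V n 1)).toReal := ENNReal.toReal_nonneg
  have hs := lam_split P hP n
  rw [mu, abs_mul, Nat.abs_cast]
  refine mul_le_mul_of_nonneg_left ?_ (Nat.cast_nonneg n)
  rw [abs_le]
  constructor <;> nlinarith

lemma partitionSums_le (B : Set (Set Cantor)) (hB : IsBorelSubalgebra B) (n : ℕ) :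
    ∀ r ∈ partitionSums B (mu n), r ≤ n := by
  rintro r ⟨k, P, hPB, hPd, hPu, rfl⟩
  have hPm : ∀ i, MeasurableSet (P i) := fun i => hB.1 _ (hPB i)
  calc ∑ i, |mu n (P i)| ≤ ∑ i, (n : ℝ) * (lam (P i)).toReal :=
        Finset.sum_le_sum fun i _ => mu_abs_le n (P i) (hPm i)
    _ = n * ∑ i, (lam (P i)).toReal := by rw [Finset.mul_sum]
    _ = n := by rw [sum_toReal P hPm hPd, hPu]; simp

lemma mu_tendsto (B : Set (Set Cantor)) (hB : IsBorelSubalgebra B) (hT : HasPropT B)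
    (A : Set Cantor) (hA : A ∈ B) :
    Tendsto (fun n : ℕ => mu n A) atTop (nhds 0) := by
  have hAm : MeasurableSet A := hB.1 A hA
  rw [Metric.tendsto_atTop]
  intro ε hε
  obtain ⟨n, hn, hat⟩ := hT 1 (fun _ => A) (fun _ => hA) (ε/2) (by positivity)
  refine ⟨n+1, fun m hm => ?_⟩
  have hmn : n < m := by omega
  have hmpos : (0:ℝ) < m := by exact_mod_cast (by omega : 0 < m)
  have key : ∀ σ : Fin (n+1) → ZMod 2,
      |(lam (A ∩ atomC n σ ∩ V m 0)).toReal - (lam (A ∩ atomC n σ ∩ V m 1)).toReal|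
        ≤ (ε/2) * (lam (atomC n σ)).toReal / m := by
    intro σ
    have := (hat (atomC n σ) ⟨σ, rfl⟩ 0).2 m hmn
    simpa [phi] using this
  have hD : |(lam (A ∩ V m 0)).toReal - (lam (A ∩ V m 1)).toReal| ≤ (ε/2) / m := by
    rw [decomp A (V m 0) hAm (measV m 0) n, decomp A (V m 1) hAm (measV m 1) n,
      ← Finset.sum_sub_distrib]
    calc |∑ σ : Fin (n+1) → ZMod 2, ((lam (A ∩ atomC n σ ∩ V m 0)).toReal
            - (lam (A ∩ atomC n σ ∩ V m 1)).toReal)|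
        ≤ ∑ σ : Fin (n+1) → ZMod 2, |(lam (A ∩ atomC n σ ∩ V m 0)).toReal
            - (lam (A ∩ atomC n σ ∩ V m 1)).toReal| := Finset.abs_sum_le_sum_abs _ _
      _ ≤ ∑ σ : Fin (n+1) → ZMod 2, (ε/2) * (lam (atomC n σ)).toReal / m :=
          Finset.sum_le_sum fun σ _ => key σ
      _ = (ε/2) / m * ∑ σ : Fin (n+1) → ZMod 2, (lam (atomC n σ)).toReal := by
          rw [Finset.mul_sum]; congr 1; ext σ; ring
      _ = (ε/2) / m := by rw [atom_sum]; ring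
  have : |mu m A| ≤ ε/2 := by
    rw [mu, abs_mul, Nat.abs_cast]
    calc (m:ℝ) * |(lam (A ∩ V m 0)).toReal - (lam (A ∩ V m 1)).toReal|
        ≤ m * ((ε/2)/m) := mul_le_mul_of_nonneg_left hD (le_of_lt hmpos)
      _ = ε/2 := by field_simp
  rw [Real.dist_eq, sub_zero]
  linarith

lemma tvNorm_eq (B : Set (Set Cantor)) (hB : IsBorelSubalgebra B)
    (hclopen : ContainsClopen B) (n : ℕ) : tvNorm B (mu n) = n := by
  have hmem : (n:ℝ) ∈ partitionSums B (mu n) := by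
    refine ⟨2, ![V n 0, V n 1], ?_, ?_, ?_, ?_⟩
    · intro i; fin_cases i <;> exact hclopen _ (clopenV n _)
    · intro i j hij
      fin_cases i <;> fin_cases j <;> simp_all [Function.onFun]
      · exact V_disj n
      · exact (V_disj n).symm
    · ext x
      have h : ∀ j : ZMod 2, j = 0 ∨ j = 1 := by decide
      simp only [mem_iUnion, mem_univ, iff_true]
      rcases h (x n) with hx | hx
      · exact ⟨0, hx⟩
      · exact ⟨1, hx⟩
    · have e00 : V n 0 ∩ V n 0 = V n 0 := inter_self _
      have e01 : V n 0 ∩ V n 1 = ∅ := (V_disj n).inter_eq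
      have e10 : V n 1 ∩ V n 0 = ∅ := ((V_disj n).symm).inter_eq
      have e11 : V n 1 ∩ V n 1 = V n 1 := inter_self _
      have hv : (lam (V n 0)).toReal = 1/2 ∧ (lam (V n 1)).toReal = 1/2 := by
        constructor <;> · rw [lam_V]; simp
      rw [Fin.sum_univ_two]
      simp only [Matrix.cons_val_zero, Matrix.cons_val_one, Matrix.head_cons, mu,
        e00, e01, e10, e11, measure_empty, ENNReal.toReal_zero, hv.1, hv.2]
      rw [abs_of_nonneg (by positivity), abs_of_nonpos (by norm_num)]
      ring
  have hub := partitionSums_le B hB n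
  exact le_antisymm (csSup_le ⟨(n:ℝ), hmem⟩ hub) (le_csSup ⟨(n:ℝ), hub⟩ hmem)

lemma mu_finAdd (B : Set (Set Cantor)) (hB : IsBorelSubalgebra B) (n : ℕ) :
    IsBddFinAdd B (mu n) := by
  refine ⟨by simp [mu], ?_, ⟨(n:ℝ), fun r hr => partitionSums_le B hB n r hr⟩⟩
  intro A hA C hC hd
  have hCm : MeasurableSet C := hB.1 C hC
  have key : ∀ i : ZMod 2, (lam ((A ∪ C) ∩ V n i)).toReal
      = (lam (A ∩ V n i)).toReal + (lam (C ∩ V n i)).toReal := by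
    intro i
    rw [union_inter_distrib_right,
      measure_union (hd.mono inter_subset_left inter_subset_left) (hCm.inter (measV n i)),
      ENNReal.toReal_add (measure_ne_top lam _) (measure_ne_top lam _)]
  simp only [mu, key 0, key 1]
  ring

theorem stmt13 (B : Set (Set Cantor)) (hB : IsBorelSubalgebra B)
    (hclopen : ContainsClopen B) (hT : HasPropT B) :
    (∀ A ∈ B, Tendsto (fun n : ℕ => mu n A) atTop (nhds 0)) ∧
    (∀ n : ℕ, tvNorm B (mu n) = n) ∧
    (∀ A ∈ B, ∃ M : ℝ, ∀ n : ℕ, |mu n A| ≤ M) ∧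
    ¬ (∃ M : ℝ, ∀ n : ℕ, tvNorm B (mu n) ≤ M) ∧
    ¬ HasNikodym B := by
  have h1 : ∀ A ∈ B, Tendsto (fun n : ℕ => mu n A) atTop (nhds 0) :=
    fun A hA => mu_tendsto B hB hT A hA
  have h2 : ∀ n : ℕ, tvNorm B (mu n) = n := tvNorm_eq B hB hclopen
  have h3 : ∀ A ∈ B, ∃ M : ℝ, ∀ n : ℕ, |mu n A| ≤ M := by
    intro A hA
    obtain ⟨N, hN⟩ := (Metric.tendsto_atTop.mp (h1 A hA)) 1 one_pos
    refine ⟨1 + ∑ k ∈ Finset.range N, |mu k A|, fun n => ?_⟩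
    have hsum : (0:ℝ) ≤ ∑ k ∈ Finset.range N, |mu k A| :=
      Finset.sum_nonneg fun k _ => abs_nonneg _
    by_cases hn : n < N
    · have := Finset.single_le_sum (f := fun k => |mu k A|)
        (fun k _ => abs_nonneg _) (Finset.mem_range.mpr hn)
      linarith
    · have := hN n (by omega)
      rw [Real.dist_eq, sub_zero] at this
      linarith
  have h4 : ¬ (∃ M : ℝ, ∀ n : ℕ, tvNorm B (mu n) ≤ M) := by
    rintro ⟨M, hM⟩
    obtain ⟨n, hn⟩ := exists_nat_gt M
    have := hM n
    rw [h2 n] at this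
    linarith
  exact ⟨h1, h2, h3, h4, fun hNik => h4 (hNik mu (mu_finAdd B hB) h3)⟩
end
end

section
/- Pointwise convergence to 0 from property (T): if 𝓑 ⊆ Bor(2^ℕ) contains Clopen(2^ℕ) and has property (T), then for every A ∈ 𝓑, n·(λ(A ∩ V_n^0) − λ(A ∩ V_n^1)) → 0 as n → ∞. -/
open MeasureTheory Set Filter

noncomputable section

/-! Split `A` over the atoms `U` of `𝓐_n`: the imbalance `λ(A ∩ V_m^0) − λ(A ∩ V_m^1)` is the sum of
the imbalances of the pieces `A ∩ U`, each of which property (T) bounds by `ε λ(U) / m` for `m > n`.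
Since the atoms have total measure `1`, `m` times the imbalance of `A` is at most `ε`. -/

lemma measure_eq_sum_measure_inter_fiber {α β : Type*} [MeasurableSpace α] [Fintype β]
    (μ : Measure α) {f : α → β} (hf : ∀ b, MeasurableSet (f ⁻¹' {b})) (s : Set α) :
    μ s = ∑ b, μ (s ∩ f ⁻¹' {b}) := by
  have hsum := sum_measure_preimage_singleton (μ := μ.restrict s) Finset.univ fun b _ => hf b
  simp only [Finset.coe_univ, preimage_univ, Measure.restrict_apply_univ] at hsum
  simp only [← hsum, Measure.restrict_apply (hf _), inter_comm]

def prefixCoords (n : ℕ) (x : Cantor) : Fin (n + 1) → ZMod 2 := fun i => x i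

lemma measurable_prefixCoords (n : ℕ) : Measurable (prefixCoords n) :=
  measurable_pi_lambda _ fun i => measurable_pi_apply (i : ℕ)

lemma isAtomOf_prefixCoords_fiber (n : ℕ) (σ : Fin (n + 1) → ZMod 2) :
    IsAtomOf n (prefixCoords n ⁻¹' {σ}) :=
  ⟨σ, by ext x; simp [prefixCoords, funext_iff]⟩

lemma lam_toReal_eq_sum_inter_atoms (n : ℕ) (s : Set Cantor) :
    (lam s).toReal = ∑ σ, (lam (s ∩ prefixCoords n ⁻¹' {σ})).toReal := by
  rw [measure_eq_sum_measure_inter_fiber lam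
      (fun σ => measurable_prefixCoords n (measurableSet_singleton σ)) s,
    ENNReal.toReal_sum fun σ _ => measure_ne_top lam _]

lemma sum_lam_atoms_toReal (n : ℕ) : ∑ σ, (lam (prefixCoords n ⁻¹' {σ})).toReal = 1 := by
  simpa using (lam_toReal_eq_sum_inter_atoms n univ).symm

lemma phi_le_of_forall_isAtomOf {m n : ℕ} {A : Set Cantor} {c : ℝ}
    (h : ∀ U, IsAtomOf n U → phi m (A ∩ U) ≤ c * (lam U).toReal) : phi m A ≤ c := by
  have hdecomp (i : ZMod 2) : (lam (A ∩ V m i)).toReal =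
      ∑ σ, (lam (A ∩ prefixCoords n ⁻¹' {σ} ∩ V m i)).toReal := by
    rw [lam_toReal_eq_sum_inter_atoms n]
    simp only [inter_right_comm]
  calc phi m A
      = |∑ σ, ((lam (A ∩ prefixCoords n ⁻¹' {σ} ∩ V m 0)).toReal -
          (lam (A ∩ prefixCoords n ⁻¹' {σ} ∩ V m 1)).toReal)| := by
        rw [phi, hdecomp 0, hdecomp 1, Finset.sum_sub_distrib]
    _ ≤ ∑ σ, phi m (A ∩ prefixCoords n ⁻¹' {σ}) := Finset.abs_sum_le_sum_abs _ _
    _ ≤ ∑ σ, c * (lam (prefixCoords n ⁻¹' {σ})).toReal :=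
        Finset.sum_le_sum fun σ _ => h _ (isAtomOf_prefixCoords_fiber n σ)
    _ = c := by rw [← Finset.mul_sum, sum_lam_atoms_toReal, mul_one]

theorem stmt14_general (B : Set (Set Cantor)) (hT : HasPropT B) :
    ∀ A ∈ B, Tendsto
      (fun n : ℕ => (n : ℝ) * ((lam (A ∩ V n 0)).toReal - (lam (A ∩ V n 1)).toReal))
      atTop (nhds 0) := by
  intro A hA
  rw [NormedAddGroup.tendsto_nhds_zero]
  intro ε hε
  obtain ⟨n, -, hn⟩ := hT 1 (fun _ => A) (fun _ => hA) (ε / 2) (half_pos hε)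
  filter_upwards [eventually_gt_atTop n] with m hm
  have hm0 : (0 : ℝ) < m := by exact_mod_cast (Nat.zero_le n).trans_lt hm
  have hphi : phi m A ≤ ε / 2 / m := phi_le_of_forall_isAtomOf fun U hU => by
    rw [div_mul_eq_mul_div₀]
    exact (hn U hU 0).2 m hm
  calc ‖(m : ℝ) * ((lam (A ∩ V m 0)).toReal - (lam (A ∩ V m 1)).toReal)‖
      = m * phi m A := by rw [norm_mul, Real.norm_natCast, Real.norm_eq_abs, phi]
    _ ≤ m * (ε / 2 / m) := by gcongr
    _ = ε / 2 := by field_simp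
    _ < ε := half_lt_self hε

theorem stmt14 (B : Set (Set Cantor)) (hB : IsBorelSubalgebra B)
    (hclopen : ContainsClopen B) (hT : HasPropT B) :
    ∀ A ∈ B, Tendsto
      (fun n : ℕ => (n : ℝ) * ((lam (A ∩ V n 0)).toReal - (lam (A ∩ V n 1)).toReal))
      atTop (nhds 0) :=
  stmt14_general B hT
end
end
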